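/- The AISD overshoot does not scale with the link capacity: for fixed n : ℕ, k_i > 0, and k_d > 0, the two-flow AISD overshoot at time n is the same for every capacity C₁, C₂ > 1; i.e., the function sending C to the AISD overshoot at time n is constant (equal to 2*n*k_i - 2*k_d + 1). -/

import Mathlib

theorem eq_apply_zero_add_nsmul_of_forall_succ {M : Type*} [AddMonoid M] {f : ℕ → M} {k : M}
    (h : ∀ t, f (t + 1) = f t + k) (n : ℕ) : f n = f 0 + n • k := by
  induction n with
  | zero => simp
  | succ m ih => rw [h, ih, succ_nsmul, add_assoc]

theorem aisd_overshoot_eq {C k_i k_d : ℝ} {f1 f2 : ℕ → ℝ}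
    (hf1_0 : f1 0 = C - k_d) (hf2_0 : f2 0 = 1 - k_d)
    (hf1 : ∀ t, f1 (t + 1) = f1 t + k_i) (hf2 : ∀ t, f2 (t + 1) = f2 t + k_i) (n : ℕ) :
    f1 n + f2 n - C = 2 * n * k_i - 2 * k_d + 1 := by
  rw [eq_apply_zero_add_nsmul_of_forall_succ hf1, eq_apply_zero_add_nsmul_of_forall_succ hf2,
    hf1_0, hf2_0, nsmul_eq_mul]
  ring

theorem aisd_overshoot_capacity_independent_general (n : ℕ) (k_i k_d : ℝ)
    (C₁ C₂ : ℝ)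
    (f1 f2 g1 g2 : ℕ → ℝ)
    (hf1_0 : f1 0 = C₁ - k_d) (hf2_0 : f2 0 = 1 - k_d)
    (hg1_0 : g1 0 = C₂ - k_d) (hg2_0 : g2 0 = 1 - k_d)
    (hf1 : ∀ t : ℕ, f1 (t + 1) = f1 t + k_i)
    (hf2 : ∀ t : ℕ, f2 (t + 1) = f2 t + k_i)
    (hg1 : ∀ t : ℕ, g1 (t + 1) = g1 t + k_i)
    (hg2 : ∀ t : ℕ, g2 (t + 1) = g2 t + k_i) :
    f1 n + f2 n - C₁ = g1 n + g2 n - C₂ ∧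
      f1 n + f2 n - C₁ = 2 * (n : ℝ) * k_i - 2 * k_d + 1 := by
  have hf := aisd_overshoot_eq hf1_0 hf2_0 hf1 hf2 n
  have hg := aisd_overshoot_eq hg1_0 hg2_0 hg1 hg2 n
  exact ⟨hf.trans hg.symm, hf⟩

theorem aisd_overshoot_capacity_independent (n : ℕ) (k_i k_d : ℝ)
    (hki : k_i > 0) (hkd : k_d > 0) (C₁ C₂ : ℝ) (hC1 : C₁ > 1) (hC2 : C₂ > 1)
    (f1 f2 g1 g2 : ℕ → ℝ)
    (hf1_0 : f1 0 = C₁ - k_d) (hf2_0 : f2 0 = 1 - k_d)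
    (hg1_0 : g1 0 = C₂ - k_d) (hg2_0 : g2 0 = 1 - k_d)
    (hf1 : ∀ t : ℕ, f1 (t + 1) = f1 t + k_i)
    (hf2 : ∀ t : ℕ, f2 (t + 1) = f2 t + k_i)
    (hg1 : ∀ t : ℕ, g1 (t + 1) = g1 t + k_i)
    (hg2 : ∀ t : ℕ, g2 (t + 1) = g2 t + k_i) :
    f1 n + f2 n - C₁ = g1 n + g2 n - C₂ ∧
      f1 n + f2 n - C₁ = 2 * (n : ℝ) * k_i - 2 * k_d + 1 :=
  aisd_overshoot_capacity_independent_general n k_i k_d C₁ C₂ f1 f2 g1 g2 hf1_0 hf2_0 hg1_0 hg2_0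
    hf1 hf2 hg1 hg2
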